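/- Let d ≥ 2, let (β, B, γ) be an admissible simplex parameter set with γ_{ij} > 0 for all i ≠ j, and let b(x) = β + Bx be the associated affine drift. Let J be the set of indices j ∈ {1,…,d} such that b_j(x) = 0 for every x ∈ Δ^d with x_j = 0, and set E = {x ∈ Δ^d : x_j > 0 for all j ∉ J}. Then for every x ∈ E there exists a vector λ ∈ ℝ^{d−1} such that b̃(x) = c̃(x) λ, where b̃(x) ∈ ℝ^{d−1} is b(x) with the d-th entry deleted and c̃(x) is c(x) with the d-th row and column deleted; i.e., b̃(x) lies in the column space of c̃(x) for every x ∈ E. -/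

import Mathlib

/-!
The matrix `c(x)` is the weighted graph Laplacian with weights `γᵢⱼ xᵢ xⱼ`, so it is symmetric
with quadratic form `½ ∑ᵢⱼ γᵢⱼ xᵢ xⱼ (uᵢ - uⱼ)²`. As `c̃(x)` is symmetric, it suffices to show
`b̃(x) ⊥ ker c̃(x)`. Extending `v ∈ ker c̃(x)` by zero to `u` gives `uᵀ c(x) u = 0`, so `u` is
constant on the support of `x`, where all weights are positive. For `x ∈ E` the drift `b(x)`
vanishes off the support of `x`, and `∑ᵢ bᵢ(x) = 0` by the column condition on `(β, B)`;
hence `b̃(x) ⬝ v = b(x) ⬝ u = 0`.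
-/

open Matrix Finset Function

theorem Matrix.IsHermitian.exists_mulVec_eq_of_forall_dotProduct_eq_zero {n : Type*} [Fintype n]
    [DecidableEq n] {A : Matrix n n ℝ} (hA : A.IsHermitian) {w : n → ℝ}
    (hw : ∀ v, A *ᵥ v = 0 → w ⬝ᵥ v = 0) : ∃ l, A *ᵥ l = w := by
  have hrange : LinearMap.range A.toEuclideanLin = (LinearMap.ker A.toEuclideanLin)ᗮ := by
    rw [← (isSymmetric_toEuclideanLin_iff.mpr hA).orthogonal_range, Submodule.orthogonal_orthogonal]
  have hmem : WithLp.toLp 2 w ∈ LinearMap.range A.toEuclideanLin := by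
    rw [hrange, Submodule.mem_orthogonal']
    intro u hu
    rw [EuclideanSpace.inner_eq_star_dotProduct]
    simpa [dotProduct_comm] using hw u.ofLp (congrArg WithLp.ofLp hu)
  obtain ⟨l, hl⟩ := hmem
  exact ⟨l.ofLp, congrArg WithLp.ofLp hl⟩

section extend
variable {ι κ : Type*} [Fintype ι] [Fintype κ] {f : ι → κ}

theorem dotProduct_extend_zero (hf : Injective f) (w : κ → ℝ) (v : ι → ℝ) :
    w ⬝ᵥ extend f v 0 = (w ∘ f) ⬝ᵥ v :=
  (Fintype.sum_of_injective f hf _ _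
    (fun j hj => by simp [extend_apply' _ _ _ (by simpa using hj)])
    (fun k => by simp [hf.extend_apply])).symm

theorem submatrix_mulVec_eq_comp_mulVec_extend_zero (hf : Injective f) (A : Matrix κ κ ℝ)
    (v : ι → ℝ) : A.submatrix f f *ᵥ v = (A *ᵥ extend f v 0) ∘ f := by
  ext k
  rw [Function.comp_apply, mulVec, mulVec, dotProduct_extend_zero hf]
  rfl

end extend

section
variable {ι : Type*} [Fintype ι]

theorem dotProduct_eq_zero_of_sum_eq_zero {p : ι → Prop} {b u : ι → ℝ} (hsum : ∑ i, b i = 0)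
    (hb : ∀ i, ¬ p i → b i = 0) (hu : ∀ i j, p i → p j → u i = u j) : b ⬝ᵥ u = 0 := by
  by_cases h : ∃ i₀, p i₀
  · obtain ⟨i₀, hi₀⟩ := h
    calc b ⬝ᵥ u = ∑ i, b i * u i₀ := sum_congr rfl fun i _ => by
          by_cases hi : p i
          · rw [hu i i₀ hi hi₀]
          · rw [hb i hi, zero_mul, zero_mul]
      _ = 0 := by rw [← sum_mul, hsum, zero_mul]
  · exact sum_eq_zero fun i _ => by rw [hb i fun hi => h ⟨i, hi⟩, zero_mul]

theorem sum_affine_drift_eq_zero {β : ι → ℝ} {B : Matrix ι ι ℝ}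
    (hB : ∀ j, ∑ i, B i j + ∑ i, β i = 0) {x : ι → ℝ} (hx : ∑ i, x i = 1) :
    ∑ i, (β i + ∑ j, B i j * x j) = 0 := by
  have hcol : ∀ j, ∑ i, B i j * x j = -(∑ i, β i) * x j := fun j => by
    rw [← sum_mul, eq_neg_of_add_eq_zero_left (hB j)]
  rw [sum_add_distrib, sum_comm, sum_congr rfl fun j _ => hcol j, ← mul_sum, hx]
  ring

variable [DecidableEq ι]

def weightedLaplacian (w : ι → ι → ℝ) : Matrix ι ι ℝ :=
  Matrix.of fun i j => if i = j then ∑ k ∈ univ.erase i, w i k else -w i j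

theorem weightedLaplacian_mulVec_apply (w : ι → ι → ℝ) (u : ι → ℝ) (i : ι) :
    (weightedLaplacian w *ᵥ u) i = ∑ j, w i j * (u i - u j) := by
  rw [mulVec, dotProduct, ← add_sum_erase _ _ (mem_univ i), ← add_sum_erase _ _ (mem_univ i)]
  simp only [weightedLaplacian, of_apply, if_pos, sub_self, mul_zero, zero_add, sum_mul,
    ← sum_add_distrib]
  refine sum_congr rfl fun j hj => ?_
  rw [if_neg (ne_of_mem_erase hj).symm]
  ring

theorem isHermitian_weightedLaplacian {w : ι → ι → ℝ} (hw : ∀ i j, w i j = w j i) :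
    (weightedLaplacian w).IsHermitian :=
  IsHermitian.ext fun i j => by
    by_cases h : i = j
    · subst h; rfl
    · simp [weightedLaplacian, h, Ne.symm h, hw i j]

theorem two_mul_dotProduct_weightedLaplacian_mulVec {w : ι → ι → ℝ} (hw : ∀ i j, w i j = w j i)
    (u : ι → ℝ) :
    2 * (u ⬝ᵥ weightedLaplacian w *ᵥ u) = ∑ i, ∑ j, w i j * (u i - u j) ^ 2 := by
  have hswap : ∑ i, ∑ j, w i j * (u i - u j) * u i = ∑ i, ∑ j, w i j * (u j - u i) * u j := by
    rw [sum_comm]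
    exact sum_congr rfl fun i _ => sum_congr rfl fun j _ => by rw [hw]
  have hform : u ⬝ᵥ weightedLaplacian w *ᵥ u = ∑ i, ∑ j, w i j * (u i - u j) * u i := by
    simp only [dotProduct, weightedLaplacian_mulVec_apply, mul_sum]
    exact sum_congr rfl fun i _ => sum_congr rfl fun j _ => by ring
  calc 2 * (u ⬝ᵥ weightedLaplacian w *ᵥ u)
      = ∑ i, ∑ j, w i j * (u i - u j) * u i + ∑ i, ∑ j, w i j * (u j - u i) * u j := by
        rw [two_mul, hform, ← hswap]
    _ = ∑ i, ∑ j, w i j * (u i - u j) ^ 2 := by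
        simp only [← sum_add_distrib]
        exact sum_congr rfl fun i _ => sum_congr rfl fun j _ => by ring

theorem eq_of_dotProduct_weightedLaplacian_mulVec_eq_zero {w : ι → ι → ℝ}
    (hw : ∀ i j, w i j = w j i) (hw_nonneg : ∀ i j, i ≠ j → 0 ≤ w i j) {u : ι → ℝ}
    (hu : u ⬝ᵥ weightedLaplacian w *ᵥ u = 0) {i j : ι} (hij : 0 < w i j) : u i = u j := by
  have hterm_nonneg : ∀ i j, 0 ≤ w i j * (u i - u j) ^ 2 := fun i j => by
    rcases eq_or_ne i j with rfl | h
    · simp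
    · exact mul_nonneg (hw_nonneg i j h) (sq_nonneg _)
  have hsum : ∑ i, ∑ j, w i j * (u i - u j) ^ 2 = 0 := by
    rw [← two_mul_dotProduct_weightedLaplacian_mulVec hw, hu, mul_zero]
  have hterm : w i j * (u i - u j) ^ 2 = 0 :=
    (sum_eq_zero_iff_of_nonneg fun j _ => hterm_nonneg i j).mp
      ((sum_eq_zero_iff_of_nonneg fun i _ => sum_nonneg fun j _ => hterm_nonneg i j).mp hsum i
        (mem_univ i)) j (mem_univ j)
  rw [mul_eq_zero, pow_eq_zero_iff two_ne_zero, sub_eq_zero] at hterm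
  exact hterm.resolve_left hij.ne'

theorem eq_of_submatrix_weightedLaplacian_mulVec_eq_zero {κ : Type*} [Fintype κ] {f : κ → ι}
    (hf : Injective f) {w : ι → ι → ℝ} (hw : ∀ i j, w i j = w j i)
    (hw_nonneg : ∀ i j, i ≠ j → 0 ≤ w i j) {v : κ → ℝ}
    (hv : (weightedLaplacian w).submatrix f f *ᵥ v = 0) {i j : ι} (hij : 0 < w i j) :
    extend f v 0 i = extend f v 0 j := by
  refine eq_of_dotProduct_weightedLaplacian_mulVec_eq_zero hw hw_nonneg ?_ hij
  rw [dotProduct_comm, dotProduct_extend_zero hf, ← submatrix_mulVec_eq_comp_mulVec_extend_zero hf,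
    hv, zero_dotProduct]

end

theorem statement10_general (d : ℕ)
    (β : Fin d → ℝ) (B : Matrix (Fin d) (Fin d) ℝ) (γ : Fin d → Fin d → ℝ)
    (hγsymm : ∀ i j, γ i j = γ j i)
    (hγpos : ∀ i j, i ≠ j → 0 < γ i j)
    (hB1 : ∀ j, (∑ i, B i j) + (∑ i, β i) = 0)
    (b : (Fin d → ℝ) → Fin d → ℝ)
    (hb : ∀ x i, b x i = β i + ∑ j, B i j * x j)
    (c : (Fin d → ℝ) → Matrix (Fin d) (Fin d) ℝ)
    (hc : ∀ x i j, c x i j =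
      if i = j then ∑ k ∈ Finset.univ.erase i, γ i k * x i * x k
      else -(γ i j * x i * x j))
    (J : Set (Fin d))
    (hJ : J = {j | ∀ x ∈ stdSimplex ℝ (Fin d), x j = 0 → b x j = 0})
    (E : Set (Fin d → ℝ))
    (hE : E = {x | x ∈ stdSimplex ℝ (Fin d) ∧ ∀ j ∉ J, 0 < x j}) :
    ∀ x ∈ E, ∃ lam : Fin (d - 1) → ℝ,
      (fun k => b x (Fin.castLE (Nat.sub_le d 1) k)) =
        ((c x).submatrix (Fin.castLE (Nat.sub_le d 1)) (Fin.castLE (Nat.sub_le d 1))) *ᵥ lam := by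
  intro x hx
  rw [hE] at hx
  obtain ⟨hxΔ, hxpos⟩ := hx
  have hcx : c x = weightedLaplacian fun i j => γ i j * x i * x j := Matrix.ext (hc x)
  have hw : ∀ i j, γ i j * x i * x j = γ j i * x j * x i := fun i j => by rw [hγsymm]; ring
  have hw_nonneg : ∀ i j, i ≠ j → 0 ≤ γ i j * x i * x j := fun i j hij => by
    have := hγpos i j hij; have := hxΔ.1 i; have := hxΔ.1 j; positivity
  have hb_face : ∀ i, ¬ 0 < x i → b x i = 0 := fun i hi => by
    have hiJ : i ∈ J := by_contra fun h => hi (hxpos i h)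
    rw [hJ] at hiJ
    exact hiJ x hxΔ (le_antisymm (not_lt.mp hi) (hxΔ.1 i))
  have hb_sum : ∑ i, b x i = 0 := by simp only [hb]; exact sum_affine_drift_eq_zero hB1 hxΔ.2
  have hf := Fin.castLE_injective (Nat.sub_le d 1)
  rw [hcx]
  have hherm := (isHermitian_weightedLaplacian hw).submatrix (Fin.castLE (Nat.sub_le d 1))
  obtain ⟨l, hl⟩ := hherm.exists_mulVec_eq_of_forall_dotProduct_eq_zero
    (w := b x ∘ Fin.castLE (Nat.sub_le d 1)) fun v hv => by
      rw [← dotProduct_extend_zero hf]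
      refine dotProduct_eq_zero_of_sum_eq_zero hb_sum hb_face fun i j hi hj => ?_
      rcases eq_or_ne i j with rfl | hij
      · rfl
      · have := hγpos i j hij
        exact eq_of_submatrix_weightedLaplacian_mulVec_eq_zero hf hw hw_nonneg hv (by positivity)
  exact ⟨l, hl.symm⟩

/-- for an admissible simplex parameter set `(β, B, γ)` with strictly positive
off-diagonal `γ`, the truncated drift `b̃(x)` lies in the column space of the truncated
diffusion matrix `c̃(x)` for every `x` in the set `E` (where the coordinates whose drift
does not vanish on the corresponding boundary face are strictly positive). -/
theorem statement10 (d : ℕ) (hd : 2 ≤ d)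
    (β : Fin d → ℝ) (B : Matrix (Fin d) (Fin d) ℝ) (γ : Fin d → Fin d → ℝ)
    (hγsymm : ∀ i j, γ i j = γ j i) (hγdiag : ∀ i, γ i i = 0)
    (hγpos : ∀ i j, i ≠ j → 0 < γ i j)
    (hB1 : ∀ j, (∑ i, B i j) + (∑ i, β i) = 0)
    (hβB : ∀ i j, i ≠ j → 0 ≤ β i + B i j)
    (b : (Fin d → ℝ) → Fin d → ℝ)
    (hb : ∀ x i, b x i = β i + ∑ j, B i j * x j)
    (c : (Fin d → ℝ) → Matrix (Fin d) (Fin d) ℝ)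
    (hc : ∀ x i j, c x i j =
      if i = j then ∑ k ∈ Finset.univ.erase i, γ i k * x i * x k
      else -(γ i j * x i * x j))
    (J : Set (Fin d))
    (hJ : J = {j | ∀ x ∈ stdSimplex ℝ (Fin d), x j = 0 → b x j = 0})
    (E : Set (Fin d → ℝ))
    (hE : E = {x | x ∈ stdSimplex ℝ (Fin d) ∧ ∀ j ∉ J, 0 < x j}) :
    ∀ x ∈ E, ∃ lam : Fin (d - 1) → ℝ,
      (fun k => b x (Fin.castLE (Nat.sub_le d 1) k)) =
        ((c x).submatrix (Fin.castLE (Nat.sub_le d 1)) (Fin.castLE (Nat.sub_le d 1))) *ᵥ lam :=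
  statement10_general d β B γ hγsymm hγpos hB1 b hb c hc J hJ E hE
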